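/- arXiv:1101.5702 — 4 statements merged into one kernel-verified Lean document; each statement's English description precedes it below -/
import Mathlib

section
/- Let X be a finite T0 topological space. Let G be the simple graph on X in which distinct points x and y are adjacent if and only if x ⋖ y or y ⋖ x, where ⋖ is the covering relation of the specialization order. Then X is a connected topological space if and only if G is a connected graph. -/
/-- The specialisation order of a topological space: `x ⪯ y` iff `x ∈ closure {y}`. -/
def specLE {X : Type*} [TopologicalSpace X] (x y : X) : Prop := x ∈ closure ({y} : Set X)

/-- Strict specialisation: `x ≺ y`. -/
def specLT {X : Type*} [TopologicalSpace X] (x y : X) : Prop := specLE x y ∧ x ≠ y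

/-- The covering relation of the specialisation order: `x ⋖ y`. -/
def specCov {X : Type*} [TopologicalSpace X] (x y : X) : Prop :=
  specLT x y ∧ ¬ ∃ z, specLT x z ∧ specLT z y

/-- The underlying undirected graph of the Hasse diagram of the specialisation order:
distinct points `x` and `y` are adjacent iff `x ⋖ y` or `y ⋖ x`. -/
def hasseGraph (X : Type*) [TopologicalSpace X] : SimpleGraph X where
  Adj x y := specCov x y ∨ specCov y x
  symm := ⟨fun _ _ (h : _ ∨ _) => h.symm⟩
  loopless := ⟨fun _ (h : _ ∨ _) => h.elim (fun h' => h'.1.2 rfl) (fun h' => h'.1.2 rfl)⟩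


/-! A finite space is Alexandrov-discrete, so any set closed under specialization in both
directions is clopen. In a finite poset `≤` is the reflexive-transitive closure of `⋖`, so the
set of points reachable from `x` in the Hasse graph is such a set and contains the connected
component of `x`. Conversely, specializations, hence Hasse edges, never leave a connected
component. So connected components are exactly the Hasse-graph components. -/

open Specialization

theorem SimpleGraph.hasse_reachable_of_le {α : Type*} [PartialOrder α] [LocallyFiniteOrder α]
    {a b : α} (h : a ≤ b) : (hasse α).Reachable a b :=
  (reachable_iff_reflTransGen a b).2 <|
    Relation.ReflTransGen.mono (fun _ _ => Or.inl) _ _ (le_iff_reflTransGen_covBy.1 h)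

theorem Specializes.connectedComponent_eq {X : Type*} [TopologicalSpace X] {x y : X}
    (h : x ⤳ y) : connectedComponent x = connectedComponent y :=
  _root_.connectedComponent_eq (h.mem_closed isClosed_connectedComponent mem_connectedComponent)

theorem isClopen_of_forall_specializes {X : Type*} [TopologicalSpace X] [AlexandrovDiscrete X]
    {s : Set X} (hs : ∀ x y, x ⤳ y → (x ∈ s ↔ y ∈ s)) : IsClopen s :=
  ⟨isOpen_compl_iff.1 <| isOpen_iff_forall_specializes.2 fun x y hxy => mt (hs x y hxy).1,
    isOpen_iff_forall_specializes.2 fun x y hxy => (hs x y hxy).2⟩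

section

variable {X : Type*} [TopologicalSpace X]

theorem specLE_iff_specializes {x y : X} : specLE x y ↔ y ⤳ x :=
  specializes_iff_mem_closure.symm

theorem connectedComponent_eq_of_hasseGraph_adj {x y : X} (h : (hasseGraph X).Adj x y) :
    connectedComponent x = connectedComponent y := by
  rcases h with h | h
  · exact (specLE_iff_specializes.1 h.1.1).connectedComponent_eq.symm
  · exact (specLE_iff_specializes.1 h.1.1).connectedComponent_eq

variable [T0Space X]

theorem specLT_iff_lt {x y : X} : specLT x y ↔ toEquiv x < toEquiv y := by
  rw [lt_iff_le_and_ne, specLT, specLE_iff_specializes]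
  rfl

theorem specCov_iff_covBy {x y : X} : specCov x y ↔ toEquiv x ⋖ toEquiv y := by
  simp only [specCov, CovBy, specLT_iff_lt, not_exists, not_and]
  rfl

def hasseGraphIso : hasseGraph X ≃g SimpleGraph.hasse (Specialization X) where
  toEquiv := toEquiv
  map_rel_iff' := by
    simp [SimpleGraph.hasse_adj, hasseGraph, specCov_iff_covBy]

theorem Specializes.hasseGraph_reachable [Finite X] {x y : X} (h : x ⤳ y) :
    (hasseGraph X).Reachable x y := by
  have : Finite (Specialization X) := ‹Finite X›
  let := LocallyFiniteOrder.ofFiniteIcc fun a b : Specialization X => Set.toFinite (Set.Icc a b)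
  exact (hasseGraphIso.reachable_iff.1
    (SimpleGraph.hasse_reachable_of_le (a := toEquiv y) (b := toEquiv x) h)).symm

theorem connectedComponent_eq_setOf_hasseGraph_reachable [Finite X] (x : X) :
    connectedComponent x = {y | (hasseGraph X).Reachable x y} := by
  refine subset_antisymm (IsClopen.connectedComponent_subset ?_ (.refl x)) ?_
  · exact isClopen_of_forall_specializes fun a b hab =>
      ⟨fun ha => ha.trans hab.hasseGraph_reachable,
        fun hb => hb.trans hab.hasseGraph_reachable.symm⟩
  · rintro y ⟨w⟩
    induction w with
    | nil => exact mem_connectedComponent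
    | cons h _ ih => rwa [connectedComponent_eq_of_hasseGraph_adj h]

end

/-- A finite T0-space is connected iff the undirected Hasse diagram of its specialisation
order is a connected graph. -/
theorem stmt4 {X : Type*} [TopologicalSpace X] [Finite X] [T0Space X] :
    ConnectedSpace X ↔ (hasseGraph X).Connected := by
  simp only [connectedSpace_iff_connectedComponent,
    SimpleGraph.connected_iff_exists_forall_reachable,
    connectedComponent_eq_setOf_hasseGraph_reachable, Set.eq_univ_iff_forall, Set.mem_ofPred_eq]
end

section
/- Let X be a finite T0 topological space and let (U, C) be a boundary pair in X. Then (U, C) is complete (i.e. its only extension is (U, C) itself) if and only if U is an open subset of X and C is a closed subset of X. -/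
/-!
If `U` is open and `C` is closed, then in any extension `(U', C')` the set `U` is clopen in the
connected set `U'` and `C` is clopen in `C'`, so the extension is trivial.

Conversely, in a finite (more generally, Alexandrov-discrete) space `nhdsKer s` is the smallest
open set containing `s`, i.e. its up-closure for the specialization order. The connected
component of `U` in the open set `nhdsKer (U ∪ C) \ closure C` is open and extends `U`;
dually, the component of `C` in the closed set `closure (U ∪ C) \ nhdsKer U` is closed and
extends `C`. Both give extensions of `(U, C)` because a locally closed set `s` equals
`nhdsKer s ∩ closure s`, so completeness forces `U` open and `C` closed.
-/

open Set

/-- A boundary pair in a topological space `X`: a pair `(U, C)` of disjoint nonempty connected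
locally closed subsets such that `U ∪ C` is locally closed and connected and `U` is relatively
open in `U ∪ C`. -/
def IsBoundaryPair {X : Type*} [TopologicalSpace X] (U C : Set X) : Prop :=
  Disjoint U C ∧ IsConnected U ∧ IsConnected C ∧
    IsLocallyClosed U ∧ IsLocallyClosed C ∧
    IsLocallyClosed (U ∪ C) ∧ IsConnected (U ∪ C) ∧
    ∃ V : Set X, IsOpen V ∧ U = V ∩ (U ∪ C)

/-- `(U', C')` is an extension of the boundary pair `(U, C)`: `U ⊆ U'` is relatively closed
in `U'` and `C ⊆ C'` is relatively open in `C'`. -/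
def IsExtensionOf {X : Type*} [TopologicalSpace X] (U' C' U C : Set X) : Prop :=
  IsBoundaryPair U' C' ∧
    U ⊆ U' ∧ (∃ Z : Set X, IsClosed Z ∧ U = Z ∩ U') ∧
    C ⊆ C' ∧ ∃ V : Set X, IsOpen V ∧ C = V ∩ C'

section Connectedness

variable {X : Type*} [TopologicalSpace X] {s t F O Z : Set X} {x y : X}

theorem IsLocallyClosed.nhdsKer_inter_closure_eq (hs : IsLocallyClosed s) :
    nhdsKer s ∩ closure s = s := by
  obtain ⟨O, Z, hO, hZ, rfl⟩ := hs
  refine subset_antisymm ?_ (subset_inter subset_nhdsKer subset_closure)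
  exact inter_subset_inter (nhdsKer_minimal inter_subset_left hO)
    (closure_minimal inter_subset_right hZ)

theorem Specializes.isPreconnected_pair (h : x ⤳ y) : IsPreconnected ({x, y} : Set X) :=
  isPreconnected_singleton.subset_closure (singleton_subset_iff.2 (mem_insert x _))
    (insert_subset (subset_closure rfl) (singleton_subset_iff.2 (specializes_iff_mem_closure.1 h)))

theorem Specializes.connectedComponentIn_eq (h : x ⤳ y) (hx : x ∈ F) (hy : y ∈ F) :
    connectedComponentIn F x = connectedComponentIn F y :=
  _root_.connectedComponentIn_eq <| h.isPreconnected_pair.subset_connectedComponentIn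
    (mem_insert x _) (insert_subset hx (singleton_subset_iff.2 hy)) (mem_insert_of_mem x rfl)

theorem nhdsKer_connectedComponentIn_inter_subset :
    nhdsKer (connectedComponentIn F x) ∩ F ⊆ connectedComponentIn F x := by
  rintro y ⟨hy, hyF⟩
  obtain ⟨z, hz, hyz⟩ := mem_nhdsKer_iff_specializes.1 hy
  rw [connectedComponentIn_eq hz,
    ← hyz.connectedComponentIn_eq hyF (connectedComponentIn_subset F x hz)]
  exact mem_connectedComponentIn hyF

theorem closure_connectedComponentIn_inter_subset :
    closure (connectedComponentIn F x) ∩ F ⊆ connectedComponentIn F x := by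
  rintro y ⟨hy, hyF⟩
  have hx : x ∈ F := connectedComponentIn_nonempty_iff.1 (closure_nonempty_iff.1 ⟨y, hy⟩)
  have hpre : IsPreconnected (insert y (connectedComponentIn F x)) :=
    isPreconnected_connectedComponentIn.subset_closure (subset_insert y _)
      (insert_subset hy subset_closure)
  exact hpre.subset_connectedComponentIn (mem_insert_of_mem y (mem_connectedComponentIn hx))
    (insert_subset hyF (connectedComponentIn_subset F x)) (mem_insert y _)

protected theorem IsClosed.connectedComponentIn (hF : IsClosed F) :
    IsClosed (connectedComponentIn F x) :=
  isClosed_of_closure_subset fun _ hy => closure_connectedComponentIn_inter_subset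
    ⟨hy, closure_minimal (connectedComponentIn_subset F x) hF hy⟩

instance AlexandrovDiscrete.toLocallyConnectedSpace [AlexandrovDiscrete X] :
    LocallyConnectedSpace X :=
  locallyConnectedSpace_iff_connectedComponentIn_open.2 fun F hF x _ =>
    nhdsKer_subset_iff_isOpen.1 fun _ hy => nhdsKer_connectedComponentIn_inter_subset
      ⟨hy, nhdsKer_minimal (connectedComponentIn_subset F x) hF hy⟩

theorem IsPreconnected.subset_of_isOpen_inter_eq_isClosed_inter (ht : IsPreconnected t)
    (hO : IsOpen O) (hZ : IsClosed Z) (hOZ : O ∩ t = Z ∩ t) (hne : (O ∩ t).Nonempty) :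
    t ⊆ O := by
  have hmem : ∀ x ∈ t, x ∈ O ↔ x ∈ Z := fun x hx =>
    ⟨fun hxO => (hOZ.le ⟨hxO, hx⟩).1, fun hxZ => (hOZ.ge ⟨hxZ, hx⟩).1⟩
  have hcover : t ⊆ O ∪ Zᶜ := fun x hx => (em (x ∈ Z)).imp (hmem x hx).2 id
  have hdisj : t ∩ (O ∩ Zᶜ) = ∅ :=
    eq_empty_of_forall_notMem fun x ⟨hx, hxO, hxZ⟩ => hxZ ((hmem x hx).1 hxO)
  obtain ⟨x, hxO, hx⟩ := hne
  exact (isPreconnected_iff_subset_of_disjoint.1 ht O Zᶜ hO hZ.isOpen_compl hcover hdisj)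
    |>.resolve_right fun htZ => htZ hx ((hmem x hx).1 hxO)

end Connectedness

section BoundaryPair

variable {X : Type*} [TopologicalSpace X] {U C : Set X} {u c : X}

def leftExtension (U C : Set X) (u : X) : Set X :=
  connectedComponentIn (nhdsKer (U ∪ C) \ closure C) u

def rightExtension (U C : Set X) (c : X) : Set X :=
  connectedComponentIn (closure (U ∪ C) \ nhdsKer U) c

theorem leftExtension_subset : leftExtension U C u ⊆ nhdsKer (U ∪ C) \ closure C :=
  connectedComponentIn_subset _ _

theorem rightExtension_subset : rightExtension U C c ⊆ closure (U ∪ C) \ nhdsKer U :=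
  connectedComponentIn_subset _ _

theorem isOpen_leftExtension [AlexandrovDiscrete X] : IsOpen (leftExtension U C u) :=
  (isOpen_nhdsKer.sdiff isClosed_closure).connectedComponentIn

theorem isClosed_rightExtension [AlexandrovDiscrete X] : IsClosed (rightExtension U C c) :=
  (isClosed_closure.sdiff isOpen_nhdsKer).connectedComponentIn

theorem IsExtensionOf.eq_of_isOpen_of_isClosed {U' C' : Set X} (hext : IsExtensionOf U' C' U C)
    (hUne : U.Nonempty) (hCne : C.Nonempty) (hU : IsOpen U) (hC : IsClosed C) :
    U' = U ∧ C' = C := by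
  obtain ⟨⟨-, hU'conn, hC'conn, -⟩, hUU', ⟨Z, hZ, hUZ⟩, hCC', ⟨W, hW, hCW⟩⟩ := hext
  have hU'U : U' ⊆ U := by
    refine hU'conn.isPreconnected.subset_of_isOpen_inter_eq_isClosed_inter hU hZ ?_ ?_ <;>
      rw [inter_eq_left.2 hUU']
    exacts [hUZ, hUne]
  have hC'W : C' ⊆ W := by
    refine hC'conn.isPreconnected.subset_of_isOpen_inter_eq_isClosed_inter hW hC ?_ ?_ <;>
      rw [← hCW]
    exacts [(inter_eq_left.2 hCC').symm, hCne]
  exact ⟨hU'U.antisymm hUU', (inter_eq_right.2 hC'W).symm.trans hCW.symm⟩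

namespace IsBoundaryPair

theorem exists_isOpen_superset_disjoint (h : IsBoundaryPair U C) :
    ∃ V, IsOpen V ∧ U ⊆ V ∧ Disjoint V C := by
  obtain ⟨hUC, -, -, -, -, -, -, V, hV, hUV⟩ := h
  refine ⟨V, hV, fun x hx => (hUV.le hx).1, disjoint_left.2 fun x hxV hxC => ?_⟩
  exact disjoint_left.1 hUC (hUV.ge ⟨hxV, Or.inr hxC⟩) hxC

theorem disjoint_nhdsKer_left (h : IsBoundaryPair U C) : Disjoint (nhdsKer U) C :=
  let ⟨_, hV, hUV, hVC⟩ := h.exists_isOpen_superset_disjoint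
  hVC.mono_left (nhdsKer_minimal hUV hV)

theorem disjoint_closure_right (h : IsBoundaryPair U C) : Disjoint U (closure C) :=
  let ⟨_, hV, hUV, hVC⟩ := h.exists_isOpen_superset_disjoint
  (hVC.closure_right hV).mono_left hUV

theorem nhdsKer_inter_closure_eq (h : IsBoundaryPair U C) :
    nhdsKer (U ∪ C) ∩ closure (U ∪ C) = U ∪ C :=
  let ⟨_, _, _, _, _, hUClc, _⟩ := h
  hUClc.nhdsKer_inter_closure_eq

theorem subset_nhdsKer_diff_closure (h : IsBoundaryPair U C) :
    U ⊆ nhdsKer (U ∪ C) \ closure C :=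
  fun _ hx => ⟨subset_nhdsKer (Or.inl hx), disjoint_left.1 h.disjoint_closure_right hx⟩

theorem subset_closure_diff_nhdsKer (h : IsBoundaryPair U C) :
    C ⊆ closure (U ∪ C) \ nhdsKer U :=
  fun _ hx => ⟨subset_closure (Or.inr hx), disjoint_right.1 h.disjoint_nhdsKer_left hx⟩

theorem subset_leftExtension (h : IsBoundaryPair U C) (hu : u ∈ U) : U ⊆ leftExtension U C u :=
  let ⟨_, hUconn, _⟩ := h
  hUconn.isPreconnected.subset_connectedComponentIn hu h.subset_nhdsKer_diff_closure

theorem subset_rightExtension (h : IsBoundaryPair U C) (hc : c ∈ C) :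
    C ⊆ rightExtension U C c :=
  let ⟨_, _, hCconn, _⟩ := h
  hCconn.isPreconnected.subset_connectedComponentIn hc h.subset_closure_diff_nhdsKer

theorem leftExtension_union_eq (h : IsBoundaryPair U C) (hu : u ∈ U) :
    leftExtension U C u ∪ C = nhdsKer (U ∪ C) ∩ closure (leftExtension U C u ∪ C) := by
  refine subset_antisymm (subset_inter (union_subset (leftExtension_subset.trans sdiff_subset)
    (subset_union_right.trans subset_nhdsKer)) subset_closure) ?_
  rintro x ⟨hxH, hxcl⟩
  by_cases hxC : x ∈ closure C
  · exact union_subset_union_left C (h.subset_leftExtension hu)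
      (h.nhdsKer_inter_closure_eq.le ⟨hxH, closure_mono subset_union_right hxC⟩)
  · rw [closure_union] at hxcl
    exact Or.inl (closure_connectedComponentIn_inter_subset ⟨hxcl.resolve_right hxC, hxH, hxC⟩)

theorem union_rightExtension_eq (h : IsBoundaryPair U C) (hc : c ∈ C) :
    U ∪ rightExtension U C c = nhdsKer (U ∪ rightExtension U C c) ∩ closure (U ∪ C) := by
  refine subset_antisymm (subset_inter subset_nhdsKer (union_subset
    (subset_union_left.trans subset_closure) (rightExtension_subset.trans sdiff_subset))) ?_
  rintro x ⟨hxH, hxcl⟩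
  by_cases hxU : x ∈ nhdsKer U
  · exact union_subset_union_right U (h.subset_rightExtension hc)
      (h.nhdsKer_inter_closure_eq.le ⟨nhdsKer_mono subset_union_left hxU, hxcl⟩)
  · rw [nhdsKer_union] at hxH
    exact Or.inr (nhdsKer_connectedComponentIn_inter_subset ⟨hxH.resolve_left hxU, hxcl, hxU⟩)

theorem isExtensionOf_leftExtension [AlexandrovDiscrete X] (h : IsBoundaryPair U C)
    (hu : u ∈ U) : IsExtensionOf (leftExtension U C u) C U C := by
  have ⟨_, _, hCconn, _, hClc, _, hUCconn, _⟩ := h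
  have hUU' := h.subset_leftExtension hu
  have hU'conn : IsConnected (leftExtension U C u) :=
    isConnected_connectedComponentIn_iff.2 (h.subset_nhdsKer_diff_closure hu)
  have hdisj : Disjoint (leftExtension U C u) C :=
    disjoint_left.2 fun x hx hxC => (leftExtension_subset hx).2 (subset_closure hxC)
  have hU'Cconn : IsConnected (leftExtension U C u ∪ C) := by
    rw [← union_eq_left.2 hUU', union_assoc]
    exact hU'conn.union ⟨u, hUU' hu, Or.inl hu⟩ hUCconn
  have hUZ : U = closure (U ∪ C) ∩ leftExtension U C u :=
    subset_antisymm (subset_inter (subset_union_left.trans subset_closure) hUU')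
      fun x ⟨hxcl, hx⟩ =>
        (h.nhdsKer_inter_closure_eq.le ⟨(leftExtension_subset hx).1, hxcl⟩).resolve_right
          (disjoint_left.1 hdisj hx)
  exact ⟨⟨hdisj, hU'conn, hCconn, isOpen_leftExtension.isLocallyClosed, hClc,
    ⟨_, _, isOpen_nhdsKer, isClosed_closure, h.leftExtension_union_eq hu⟩, hU'Cconn,
    _, isOpen_leftExtension, (inter_eq_left.2 subset_union_left).symm⟩,
    hUU', ⟨_, isClosed_closure, hUZ⟩, subset_rfl, univ, isOpen_univ, (univ_inter C).symm⟩

theorem isExtensionOf_rightExtension [AlexandrovDiscrete X] (h : IsBoundaryPair U C)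
    (hc : c ∈ C) : IsExtensionOf U (rightExtension U C c) U C := by
  have ⟨_, hUconn, _, hUlc, _, _, hUCconn, _⟩ := h
  have hCC' := h.subset_rightExtension hc
  have hC'conn : IsConnected (rightExtension U C c) :=
    isConnected_connectedComponentIn_iff.2 (h.subset_closure_diff_nhdsKer hc)
  have hdisj : Disjoint U (rightExtension U C c) :=
    disjoint_right.2 fun x hx hxU => (rightExtension_subset hx).2 (subset_nhdsKer hxU)
  have hUC'conn : IsConnected (U ∪ rightExtension U C c) :=
    hUCconn.subset_closure (union_subset_union_right U hCC') <| union_subset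
      (subset_union_left.trans subset_closure) (rightExtension_subset.trans sdiff_subset)
  have hUV : U = nhdsKer U ∩ (U ∪ rightExtension U C c) :=
    subset_antisymm (subset_inter subset_nhdsKer subset_union_left)
      fun x ⟨hxU, hx⟩ => hx.resolve_right fun hxC' => (rightExtension_subset hxC').2 hxU
  have hCW : C = nhdsKer (U ∪ C) ∩ rightExtension U C c :=
    subset_antisymm (subset_inter (subset_union_right.trans subset_nhdsKer) hCC')
      fun x ⟨hxH, hx⟩ =>
        (h.nhdsKer_inter_closure_eq.le ⟨hxH, (rightExtension_subset hx).1⟩).resolve_left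
          (disjoint_right.1 hdisj hx)
  exact ⟨⟨hdisj, hUconn, hC'conn, hUlc, isClosed_rightExtension.isLocallyClosed,
    ⟨_, _, isOpen_nhdsKer, isClosed_closure, h.union_rightExtension_eq hc⟩, hUC'conn,
    _, isOpen_nhdsKer, hUV⟩,
    subset_rfl, ⟨univ, isClosed_univ, (univ_inter U).symm⟩, hCC', _, isOpen_nhdsKer, hCW⟩

end IsBoundaryPair

end BoundaryPair

theorem stmt5_general {X : Type*} [TopologicalSpace X] [Finite X]
    {U C : Set X} (h : IsBoundaryPair U C) :
    (∀ U' C' : Set X, IsExtensionOf U' C' U C → U' = U ∧ C' = C) ↔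
      IsOpen U ∧ IsClosed C := by
  have ⟨_, ⟨⟨u, hu⟩, _⟩, ⟨⟨c, hc⟩, _⟩, _⟩ := h
  refine ⟨fun hcomplete => ⟨?_, ?_⟩, fun ⟨hU, hC⟩ _ _ hext =>
    hext.eq_of_isOpen_of_isClosed ⟨u, hu⟩ ⟨c, hc⟩ hU hC⟩
  · rw [← (hcomplete _ _ (h.isExtensionOf_leftExtension hu)).1]
    exact isOpen_leftExtension
  · rw [← (hcomplete _ _ (h.isExtensionOf_rightExtension hc)).2]
    exact isClosed_rightExtension

/-- A boundary pair `(U, C)` in a finite T0-space is complete (its only extension is itself)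
iff `U` is open and `C` is closed. -/
theorem stmt5 {X : Type*} [TopologicalSpace X] [Finite X] [T0Space X]
    {U C : Set X} (h : IsBoundaryPair U C) :
    (∀ U' C' : Set X, IsExtensionOf U' C' U C → U' = U ∧ C' = C) ↔
      IsOpen U ∧ IsClosed C :=
  stmt5_general h
end

section
/- Let X be a finite connected T0 topological space such that every point x ∈ X satisfies #{y | y ⋖ x} + #{y | x ⋖ y} = 2, where ⋖ is the covering relation of the specialization order (i.e. every vertex of the Hasse diagram of X has unoriented degree 2). Then there exist a finite T0-space Y and continuous maps f : X → Y and g : Y → X with f ∘ g = id_Y, where Y is either the four-point space S or the space C_n for some n ≥ 2. -/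
/-- The unoriented degree of a vertex in the Hasse diagram of the specialisation order. -/
noncomputable def hasseDeg {X : Type*} [TopologicalSpace X] (x : X) : ℕ :=
  Nat.card {y : X // specCov y x} + Nat.card {y : X // specCov x y}

/-- The four-point space `S` (points indexed by `Fin 4`, with `i` denoting the point `i + 1`
of `{1, 2, 3, 4}`): its open sets are `∅`, `{1}`, `{1,2}`, `{1,3}`, `{1,2,3}` and `{1,2,3,4}`,
i.e. the topology generated by `{1}`, `{1,2}`, `{1,3}`. -/
def topS : TopologicalSpace (Fin 4) :=
  TopologicalSpace.generateFrom {{0}, {0, 1}, {0, 2}}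

/-- The space `C_n` on `{1, 2} × ℤ/nℤ` (with `{1, 2}` rendered as `Fin 2`): the Alexandrov
topology of the order generated by `(1, k) ≺ (2, k)` and `(1, k) ≺ (2, k+1)`, i.e. the
topology generated by the principal up-sets `{(2, k)}` and `{(1, k), (2, k), (2, k+1)}`. -/
def topC (n : ℕ) : TopologicalSpace (Fin 2 × ZMod n) :=
  TopologicalSpace.generateFrom
    {s | (∃ k : ZMod n, s = {(1, k)}) ∨ ∃ k : ZMod n, s = {(0, k), (1, k), (1, k + 1)}}

/-!
Order `X` by specialization. The degree condition says that every point is minimal with two upper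
covers, maximal with two lower covers, or has exactly one cover on each side. Hence the points
above a non-minimal point form a chain, which ends in a unique maximal point.

If the two upper covers of a minimal point `p` lead to the same maximal point `q` (or dually), then
`p`, its two covers and `q` span a copy of `S`, and sending every other point to `q` retracts `X`
onto it. Otherwise `≤` between minimal and maximal points is a bipartite graph in which every
vertex has degree two. Passing alternately to the other maximal and the other minimal neighbour is
the rotation of a dihedral group acting on its edges whose reflections have no fixed points, so
this walk closes up into a crown `C_n`, `n ≥ 2`, without repeating a vertex, and by connectedness
it meets every minimal point. Fixing minimal points and sending every other point to the maximal
point above it retracts `X` onto the crown. Monotone maps between finite spaces are continuous.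
-/

open Set Function

namespace Set
variable {γ : Type*} {s : Set γ} {x y : γ}

noncomputable def other (s : Set γ) (x : γ) : γ := @Classical.epsilon γ ⟨x⟩ (fun y => y ∈ s ∧ y ≠ x)

theorem other_mem_and_ne (hs : s.ncard = 2) : s.other x ∈ s ∧ s.other x ≠ x :=
  Classical.epsilon_spec (exists_ne_of_one_lt_ncard (by omega) x)

theorem eq_pair_other (hs : s.ncard = 2) (hx : x ∈ s) : s = {x, s.other x} := by
  have ⟨hmem, hne⟩ := other_mem_and_ne (x := x) hs
  refine (eq_of_subset_of_ncard_le (pair_subset hx hmem) ?_ (finite_of_ncard_pos (by omega))).symm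
  rw [hs, ncard_pair hne.symm]

theorem eq_or_eq_other (hs : s.ncard = 2) (hx : x ∈ s) (hy : y ∈ s) : y = x ∨ y = s.other x := by
  rwa [eq_pair_other hs hx] at hy

theorem other_other (hs : s.ncard = 2) (hx : x ∈ s) : s.other (s.other x) = x := by
  have ⟨hmem, hne⟩ := other_mem_and_ne (x := x) hs
  exact ((eq_or_eq_other hs hmem hx).resolve_left hne.symm).symm

end Set

section Dihedral
variable {G α : Type*} [Group G] [MulAction G α]

theorem MulAction.exists_injective_zmod_orbit (g : G) (a : α) :
    ∃ e : ZMod (minimalPeriod (g • ·) a) → α, Injective e ∧ ∀ i : ℤ, e i = g ^ i • a :=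
  ⟨fun k => ((orbitZPowersEquiv g a).symm k : α), Subtype.val_injective.comp (Equiv.injective _),
   fun i => congrArg Subtype.val (orbitZPowersEquiv_symm_apply' g a i)⟩

theorem mul_mul_zpow_eq_zpow_neg_mul {s t : G} (hs : s * s = 1) (ht : t * t = 1) (k : ℤ) :
    s * (s * t) ^ k = (s * t) ^ (-k) * s := by
  have h : SemiconjBy s (s * t) (s * t)⁻¹ := by
    rw [SemiconjBy, mul_inv_rev, inv_eq_of_mul_eq_one_right ht, inv_eq_of_mul_eq_one_right hs,
      ← mul_assoc, hs, one_mul, mul_assoc, hs, mul_one]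
  simpa only [SemiconjBy, inv_zpow'] using h.zpow_right k

theorem zpow_smul_ne_smul_zpow_smul {s t : G} (hs : s * s = 1) (ht : t * t = 1)
    (hs' : ∀ x : α, s • x ≠ x) (ht' : ∀ x : α, t • x ≠ x) (x : α) (i j : ℤ) :
    (s * t) ^ i • x ≠ s • (s * t) ^ j • x := by
  set ρ := s * t
  -- `s * ρ ^ m` is conjugate to `s` or to `t`, according to the parity of `m`.
  have hsρ : s * ρ = t := by rw [← mul_assoc, hs, one_mul]
  have conj_ne {c : G} (hc : ∀ y : α, c • y ≠ y) (h : G) (y : α) : (h⁻¹ * c * h) • y ≠ y := by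
    rw [mul_smul, mul_smul, ne_eq, inv_smul_eq_iff]; exact hc _
  have reflection_ne (m : ℤ) (y : α) : (s * ρ ^ m) • y ≠ y := by
    obtain ⟨k, rfl | rfl⟩ := Int.even_or_odd' m
    · rw [two_mul, zpow_add, ← mul_assoc, mul_mul_zpow_eq_zpow_neg_mul hs ht, zpow_neg]
      exact conj_ne hs' _ y
    · rw [show 2 * k + 1 = k + (1 + k) by ring, zpow_add, zpow_one_add, ← mul_assoc,
        mul_mul_zpow_eq_zpow_neg_mul hs ht, ← mul_assoc, mul_assoc _ s, hsρ, zpow_neg]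
      exact conj_ne ht' _ y
  intro h
  apply reflection_ne (i + j) x
  rw [zpow_add, ← mul_assoc, mul_mul_zpow_eq_zpow_neg_mul hs ht, mul_smul, mul_smul, ← h,
    ← mul_smul, ← zpow_add, neg_add_cancel, zpow_zero, one_smul]

end Dihedral

section TwoRegular
variable {α β : Type*} {R : α → β → Prop}

abbrev RelEdge (R : α → β → Prop) := {w : α × β // R w.1 w.2}

noncomputable def flipFst (hβ : ∀ a b, R a b → {a' | R a' b}.ncard = 2) (w : RelEdge R) :
    RelEdge R :=
  ⟨({a | R a w.1.2}.other w.1.1, w.1.2), (other_mem_and_ne (hβ _ _ w.2)).1⟩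

noncomputable def flipSnd (hα : ∀ a b, R a b → {b' | R a b'}.ncard = 2) (w : RelEdge R) :
    RelEdge R :=
  ⟨(w.1.1, {b | R w.1.1 b}.other w.1.2), (other_mem_and_ne (hα _ _ w.2)).1⟩

variable (hα : ∀ a b, R a b → {b' | R a b'}.ncard = 2) (hβ : ∀ a b, R a b → {a' | R a' b}.ncard = 2)

theorem flipFst_involutive : Involutive (flipFst hβ) := fun w =>
  Subtype.ext (Prod.ext (other_other (hβ _ _ w.2) w.2) rfl)

theorem flipSnd_involutive : Involutive (flipSnd hα) := fun w =>
  Subtype.ext (Prod.ext rfl (other_other (hα _ _ w.2) w.2))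

theorem fst_flipFst_ne (w : RelEdge R) : (flipFst hβ w).1.1 ≠ w.1.1 :=
  (other_mem_and_ne (hβ _ _ w.2)).2

theorem snd_flipSnd_ne (w : RelEdge R) : (flipSnd hα w).1.2 ≠ w.1.2 :=
  (other_mem_and_ne (hα _ _ w.2)).2

theorem eq_or_eq_flipFst {w w' : RelEdge R} (h : w'.1.2 = w.1.2) : w' = w ∨ w' = flipFst hβ w := by
  have hw' : w'.1.1 ∈ {a | R a w.1.2} := h ▸ w'.2
  refine (eq_or_eq_other (hβ _ _ w.2) w.2 hw').imp ?_ ?_ <;>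
    exact fun h' => Subtype.ext (Prod.ext h' h)

theorem eq_or_eq_flipSnd {w w' : RelEdge R} (h : w'.1.1 = w.1.1) : w' = w ∨ w' = flipSnd hα w := by
  have hw' : w'.1.2 ∈ {b | R w.1.1 b} := h ▸ w'.2
  refine (eq_or_eq_other (hα _ _ w.2) w.2 hw').imp ?_ ?_ <;>
    exact fun h' => Subtype.ext (Prod.ext h h')

end TwoRegular

theorem exists_crown_of_ncard_eq_two {α β : Type*} [Finite α] [Finite β] {R : α → β → Prop}
    (hα : ∀ a b, R a b → {b' | R a b'}.ncard = 2) (hβ : ∀ a b, R a b → {a' | R a' b}.ncard = 2)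
    {a₀ : α} {b₀ : β} (h₀ : R a₀ b₀) :
    ∃ n, 2 ≤ n ∧ ∃ (u : ZMod n → α) (v : ZMod n → β), Injective u ∧ Injective v ∧
      ∀ k, {b | R (u k) b} = {v k, v (k + 1)} ∧ {a | R a (v (k + 1))} = {u k, u (k + 1)} := by
  -- The walk `σ * τ` never meets the `σ`-image of its orbit, which makes `u` and `v` injective.
  set σ := (flipFst_involutive hβ).toPerm
  set τ := (flipSnd_involutive hα).toPerm
  obtain ⟨e, he_inj, he⟩ :=
    MulAction.exists_injective_zmod_orbit (σ * τ) (⟨(a₀, b₀), h₀⟩ : RelEdge R)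
  generalize minimalPeriod _ _ = n at e he_inj he
  have step (k : ZMod n) : e (k + 1) = flipFst hβ (flipSnd hα (e k)) := by
    obtain ⟨i, rfl⟩ := ZMod.intCast_surjective k
    rw [add_comm, ← Int.cast_one, ← Int.cast_add, he, he, zpow_one_add, mul_smul]
    rfl
  have ne_flipFst (i j : ZMod n) : e i ≠ flipFst hβ (e j) := by
    obtain ⟨i, rfl⟩ := ZMod.intCast_surjective i
    obtain ⟨j, rfl⟩ := ZMod.intCast_surjective j
    rw [he, he]
    exact zpow_smul_ne_smul_zpow_smul (s := σ) (t := τ) (Equiv.ext (flipFst_involutive hβ))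
      (Equiv.ext (flipSnd_involutive hα)) (fun w h => fst_flipFst_ne hβ w (congrArg (·.1.1) h))
      (fun w h => snd_flipSnd_ne hα w (congrArg (·.1.2) h)) _ i j
  refine ⟨n, ?_, fun k => (e k).1.1, fun k => (e k).1.2, fun i j h => ?_, fun i j h => ?_,
    fun k => ⟨?_, ?_⟩⟩
  · have : Finite (ZMod n) := Finite.of_injective e he_inj
    rcases n with _ | _ | n
    · exact (not_finite (ZMod 0)).elim
    · have h := step 0
      rw [show (0 : ZMod 1) + 1 = 0 from Subsingleton.elim _ _] at h
      exact (fst_flipFst_ne hβ _ (congrArg (·.1.1) h).symm).elim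
    · omega
  · rcases eq_or_eq_flipSnd hα h.symm with h' | h'
    · exact he_inj h'.symm
    · rw [← flipFst_involutive hβ (flipSnd hα _), ← step] at h'
      exact absurd h' (ne_flipFst _ _)
  · rcases eq_or_eq_flipFst hβ h.symm with h' | h'
    · exact he_inj h'.symm
    · exact absurd h' (ne_flipFst _ _)
  · simp only [step]; exact eq_pair_other (hα _ _ (e k).2) (e k).2
  · simp only [step]; exact eq_pair_other (hβ _ _ (flipSnd hα (e k)).2) (flipSnd hα (e k)).2

def sLE (i j : Fin 4) : Prop := i = j ∨ i = 3 ∨ j = 0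

def crownLE (n : ℕ) (a b : Fin 2 × ZMod n) : Prop :=
  a = b ∨ a.1 = 0 ∧ b.1 = 1 ∧ (b.2 = a.2 ∨ b.2 = a.2 + 1)

def RetractsOnto (X : Type*) [LE X] {Y : Type*} (r : Y → Y → Prop) : Prop :=
  ∃ f : X → Y, ∃ g : Y → X,
    (∀ x y, x ≤ y → r (f x) (f y)) ∧ (∀ i j, r i j → g i ≤ g j) ∧ f ∘ g = id

theorem sLE_rev_iff {i j : Fin 4} : sLE i.rev j.rev ↔ sLE j i := by
  revert i j; unfold sLE; decide

def HasseDegreeTwo (X : Type*) [PartialOrder X] : Prop :=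
  ∀ x : X, {y | y ⋖ x}.ncard + {y | x ⋖ y}.ncard = 2

theorem HasseDegreeTwo.dual {X : Type*} [PartialOrder X] (hX : HasseDegreeTwo X) :
    HasseDegreeTwo Xᵒᵈ := fun x => by
  have h1 : {y : Xᵒᵈ | y ⋖ x} = {y : X | OrderDual.ofDual x ⋖ y} :=
    ext fun _ => ofDual_covBy_ofDual_iff.symm
  have h2 : {y : Xᵒᵈ | x ⋖ y} = {y : X | y ⋖ OrderDual.ofDual x} :=
    ext fun _ => ofDual_covBy_ofDual_iff.symm
  rw [h1, h2, add_comm]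
  exact hX _

section FinitePoset
variable {X : Type*} [PartialOrder X] [Finite X] {p q x y : X}

theorem ncard_covBy_eq_zero_iff_isMax : {y | x ⋖ y}.ncard = 0 ↔ IsMax x := by
  rw [ncard_eq_zero, eq_empty_iff_forall_notMem]
  refine ⟨fun h => not_not.mp fun hx => ?_, fun hx y hxy => hx.not_lt hxy.lt⟩
  obtain ⟨y, hxy⟩ := not_isMax_iff.mp hx
  obtain ⟨z, hxz, -⟩ := exists_covBy_le_of_lt hxy
  exact h z hxz

theorem ncard_covBy_eq_zero_iff_isMin : {y | y ⋖ x}.ncard = 0 ↔ IsMin x := by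
  rw [ncard_eq_zero, eq_empty_iff_forall_notMem]
  refine ⟨fun h => not_not.mp fun hx => ?_, fun hx y hyx => hx.not_lt hyx.lt⟩
  obtain ⟨y, hyx⟩ := not_isMin_iff.mp hx
  obtain ⟨z, -, hzx⟩ := exists_le_covBy_of_lt hyx
  exact h z hzx

theorem exists_isMax_ge (x : X) : ∃ q, x ≤ q ∧ IsMax q := by
  obtain ⟨q, hxq, hq⟩ := Finite.exists_le_maximal (p := (x ≤ ·)) le_rfl
  exact ⟨q, hxq, fun y hy => hq.2 (hxq.trans hy) hy⟩

noncomputable def maxAbove (x : X) : X := (exists_isMax_ge x).choose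

theorem le_maxAbove (x : X) : x ≤ maxAbove x := (exists_isMax_ge x).choose_spec.1

theorem isMax_maxAbove (x : X) : IsMax (maxAbove x) := (exists_isMax_ge x).choose_spec.2

theorem maxAbove_eq_self (hq : IsMax q) : maxAbove q = q := (hq.eq_of_ge (le_maxAbove q))

namespace HasseDegreeTwo
variable (hX : HasseDegreeTwo X)
include hX

theorem not_isMin_of_isMax (hq : IsMax q) : ¬IsMin q := fun hq' => by
  have := hX q
  rw [ncard_covBy_eq_zero_iff_isMax.mpr hq, ncard_covBy_eq_zero_iff_isMin.mpr hq'] at this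
  omega

theorem ncard_covBy_eq_two_of_isMin (hp : IsMin p) : {y | p ⋖ y}.ncard = 2 := by
  simpa [ncard_covBy_eq_zero_iff_isMin.mpr hp] using hX p

theorem ncard_covBy_le_one_of_not_isMin (hx : ¬IsMin x) : {y | x ⋖ y}.ncard ≤ 1 := by
  have := hX x
  have := mt ncard_covBy_eq_zero_iff_isMin.mp hx
  omega

theorem ncard_covBy_le_one_of_not_isMax (hx : ¬IsMax x) : {y | y ⋖ x}.ncard ≤ 1 := by
  have := hX x
  have := mt ncard_covBy_eq_zero_iff_isMax.mp hx
  omega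

theorem isChain_Ici (hx : ¬IsMin x) : IsChain (· ≤ ·) (Ici x) := by
  induction x using WellFoundedGT.induction with
  | _ x ih =>
    intro a (hxa : x ≤ a) b (hxb : x ≤ b) _
    rcases hxa.eq_or_lt with rfl | hxa
    · exact .inl hxb
    rcases hxb.eq_or_lt with rfl | hxb
    · exact .inr hxa.le
    obtain ⟨z, hxz, hza⟩ := exists_covBy_le_of_lt hxa
    obtain ⟨z', hxz', hzb⟩ := exists_covBy_le_of_lt hxb
    obtain rfl : z = z' := ((ncard_le_one).mp (hX.ncard_covBy_le_one_of_not_isMin hx)) z hxz z' hxz'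
    exact (ih z hxz.lt hxz.lt.not_isMin).total hza hzb

theorem eq_maxAbove (hx : ¬IsMin x) (hq : IsMax q) (hxq : x ≤ q) : q = maxAbove x :=
  ((hX.isChain_Ici hx).total hxq (le_maxAbove x)).elim hq.eq_of_le (isMax_maxAbove x).eq_of_ge

theorem maxAbove_eq (hx : ¬IsMin x) (hxy : x ≤ y) : maxAbove y = maxAbove x :=
  hX.eq_maxAbove hx (isMax_maxAbove y) (hxy.trans (le_maxAbove y))

theorem eq_of_lt_of_covBy (hp : IsMin p) (hpx : p ⋖ x) (hx : ¬IsMax x) (hyx : y < x) : y = p := by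
  obtain ⟨z, hyz, hzx⟩ := exists_le_covBy_of_lt hyx
  obtain rfl : z = p := ((ncard_le_one).mp (hX.ncard_covBy_le_one_of_not_isMax hx)) z hzx p hpx
  exact hp.eq_of_le hyz

theorem setOf_isMax_and_le_eq_pair {a b : X} (hp : IsMin p) (hab : {y | p ⋖ y} = {a, b}) :
    {q | IsMax q ∧ p ≤ q} = {maxAbove a, maxAbove b} := by
  have hpa : p ⋖ a := (hab.symm ▸ mem_insert a {b} : a ∈ {y | p ⋖ y})
  have hpb : p ⋖ b := (hab.symm ▸ mem_insert_of_mem a rfl : b ∈ {y | p ⋖ y})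
  ext q
  refine ⟨fun ⟨hq, hpq⟩ => ?_, ?_⟩
  · obtain ⟨z, hpz, hzq⟩ :=
      exists_covBy_le_of_lt (hpq.lt_of_ne fun h => hX.not_isMin_of_isMax (h ▸ hq) hp)
    have hz : z ∈ ({a, b} : Set X) := hab ▸ hpz
    rcases hz with rfl | rfl
    · exact .inl (hX.eq_maxAbove hpz.lt.not_isMin hq hzq)
    · exact .inr (hX.eq_maxAbove hpz.lt.not_isMin hq hzq)
  · rintro (rfl | rfl)
    · exact ⟨isMax_maxAbove a, hpa.le.trans (le_maxAbove a)⟩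
    · exact ⟨isMax_maxAbove b, hpb.le.trans (le_maxAbove b)⟩

theorem retractsOnto_sLE_of_isMin (hp : IsMin p) (h : {q | IsMax q ∧ p ≤ q}.ncard ≠ 2) :
    RetractsOnto X sLE := by
  classical
  obtain ⟨a, b, hab, hcov⟩ := ncard_eq_two.mp (hX.ncard_covBy_eq_two_of_isMin hp)
  have hpa : p ⋖ a := (hcov.symm ▸ mem_insert a {b} : a ∈ {y | p ⋖ y})
  have hpb : p ⋖ b := (hcov.symm ▸ mem_insert_of_mem a rfl : b ∈ {y | p ⋖ y})
  have hq : maxAbove a = maxAbove b := by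
    by_contra hne
    exact h (by rw [hX.setOf_isMax_and_le_eq_pair hp hcov, ncard_pair hne])
  set q := maxAbove b
  have hba : ¬b ≤ a := fun h => hpa.2 hpb.lt (h.lt_of_ne hab.symm)
  have hab' : ¬a ≤ b := fun h => hpb.2 hpa.lt (h.lt_of_ne hab)
  have haq : a < q := (le_maxAbove a).trans_eq hq |>.lt_of_ne fun h => hba (h ▸ le_maxAbove b)
  have hbq : b < q := (le_maxAbove b).lt_of_ne fun h => hab' (h ▸ (le_maxAbove a).trans_eq hq)
  -- Only `p` lies below `a` or `b`, so all points but `p`, `a`, `b` may be sent to `q`.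
  have hlt {x y : X} (hxy : x < y) : x = p ∨ y ≠ p ∧ y ≠ a ∧ y ≠ b := by
    refine or_iff_not_imp_left.mpr fun hx => ⟨?_, ?_, ?_⟩ <;> rintro rfl
    · exact hp.not_lt hxy
    · exact hx (hX.eq_of_lt_of_covBy hp hpa haq.not_isMax hxy)
    · exact hx (hX.eq_of_lt_of_covBy hp hpb hbq.not_isMax hxy)
  refine ⟨fun x => if x = p then 3 else if x = a then 1 else if x = b then 2 else 0,
    ![q, a, b, p], fun x y hxy => ?_, fun i j hij => ?_, ?_⟩
  · rcases hxy.eq_or_lt with rfl | hxy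
    · exact .inl rfl
    rcases hlt hxy with rfl | ⟨hyp, hya, hyb⟩
    · simp [sLE]
    · simp [sLE, hyp, hya, hyb]
  · have hle : ∀ i, p ≤ ![q, a, b, p] i ∧ ![q, a, b, p] i ≤ q := by
      intro i; fin_cases i
      exacts [⟨hpa.le.trans haq.le, le_rfl⟩, ⟨hpa.le, haq.le⟩, ⟨hpb.le, hbq.le⟩,
        ⟨le_rfl, hpa.le.trans haq.le⟩]
    rcases hij with rfl | rfl | rfl
    exacts [le_rfl, (hle j).1, (hle i).2]
  · have hqp : q ≠ p := (hpb.lt.trans hbq).ne'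
    funext i; fin_cases i <;> simp [hqp, haq.ne', hbq.ne', hpa.lt.ne', hpb.lt.ne', hab.symm]

theorem retractsOnto_sLE_of_isMax (hq : IsMax q) (h : {p | IsMin p ∧ p ≤ q}.ncard ≠ 2) :
    RetractsOnto X sLE := by
  obtain ⟨f, g, hf, hg, hfg⟩ := hX.dual.retractsOnto_sLE_of_isMin (p := OrderDual.toDual q) hq h
  refine ⟨Fin.rev ∘ f ∘ OrderDual.toDual, OrderDual.ofDual ∘ g ∘ Fin.rev,
    fun x y hxy => sLE_rev_iff.mpr (hf _ _ hxy), fun i j hij => hg _ _ (sLE_rev_iff.mpr hij), ?_⟩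
  funext i
  exact (congrArg Fin.rev (congrFun hfg i.rev)).trans (Fin.rev_rev i)

section Crown
variable (hconn : ∀ D : Set X, D.Nonempty → IsUpperSet D → IsLowerSet D → D = univ)
  {n : ℕ} {u v : ZMod n → X}
  (huv : ∀ k, {q | IsMin (u k) ∧ IsMax q ∧ u k ≤ q} = {v k, v (k + 1)})
  (hvu : ∀ k, {p | IsMin p ∧ IsMax (v (k + 1)) ∧ p ≤ v (k + 1)} = {u k, u (k + 1)})
include hconn huv hvu

theorem exists_eq_of_isMin (hp : IsMin p) : ∃ k, u k = p := by
  have hmin (k : ZMod n) : IsMin (u k) := by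
    have h := mem_insert (v k) {v (k + 1)}
    rw [← huv k] at h
    exact h.1
  let D := {x | (∃ k, u k = x) ∨ ¬IsMin x ∧ ∃ k, v k = maxAbove x}
  have hD : D = univ := by
    refine hconn D ⟨u 0, .inl ⟨0, rfl⟩⟩ (fun x y hxy hx => ?_) (fun x y hyx hx => ?_)
    · rcases hxy.eq_or_lt with rfl | hxy
      · exact hx
      refine .inr ⟨hxy.not_isMin, ?_⟩
      rcases hx with ⟨k, rfl⟩ | ⟨hx, k, hk⟩
      · have hy : maxAbove y ∈ {q | IsMin (u k) ∧ IsMax q ∧ u k ≤ q} :=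
          ⟨hmin k, isMax_maxAbove y, hxy.le.trans (le_maxAbove y)⟩
        rw [huv k] at hy
        rcases hy with h | h
        exacts [⟨k, h.symm⟩, ⟨k + 1, h.symm⟩]
      · exact ⟨k, hk.trans (hX.maxAbove_eq hx hxy.le).symm⟩
    · rcases hx with ⟨k, rfl⟩ | ⟨hx, k, hk⟩
      · exact .inl ⟨k, (hmin k).eq_of_ge hyx⟩
      by_cases hy : IsMin y
      · have hy' : y ∈ {p | IsMin p ∧ IsMax (v (k - 1 + 1)) ∧ p ≤ v (k - 1 + 1)} := by
          rw [sub_add_cancel, hk]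
          exact ⟨hy, isMax_maxAbove x, hyx.trans (le_maxAbove x)⟩
        rw [hvu] at hy'
        rcases hy' with h | h
        exacts [.inl ⟨k - 1, h.symm⟩, .inl ⟨k - 1 + 1, h.symm⟩]
      · exact .inr ⟨hy, k, hk.trans (hX.maxAbove_eq hy hyx)⟩
  have hpD : p ∈ D := hD ▸ mem_univ p
  exact hpD.resolve_right fun h => h.1 hp

theorem retractsOnto_crownLE (hu : Injective u) (hv : Injective v) :
    RetractsOnto X (crownLE n) := by
  classical
  have hmem (k : ZMod n) : IsMin (u k) ∧ IsMax (v k) ∧ u k ≤ v k ∧ u k ≤ v (k + 1) := by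
    have h := mem_insert (v k) {v (k + 1)}
    have h' := mem_insert_of_mem (v k) (mem_singleton (v (k + 1)))
    rw [← huv k] at h h'
    exact ⟨h.1, h.2.1, h.2.2, h'.2.2⟩
  refine ⟨fun x => if IsMin x then (0, invFun u x) else (1, invFun v (maxAbove x)),
    fun c => if c.1 = 0 then u c.2 else v c.2, fun x y hxy => ?_, ?_, ?_⟩
  · rcases hxy.eq_or_lt with rfl | hxy
    · exact .inl rfl
    have hy := hxy.not_isMin
    by_cases hx : IsMin x
    · obtain ⟨k, rfl⟩ := hX.exists_eq_of_isMin hconn huv hvu hx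
      have hy' : maxAbove y ∈ {q | IsMin (u k) ∧ IsMax q ∧ u k ≤ q} :=
        ⟨hx, isMax_maxAbove y, hxy.le.trans (le_maxAbove y)⟩
      rw [huv k] at hy'
      simp only [if_pos hx, if_neg hy, leftInverse_invFun hu k]
      refine .inr ⟨rfl, rfl, ?_⟩
      rcases hy' with h | h
      · exact .inl (by rw [h, leftInverse_invFun hv])
      · exact .inr (by rw [show maxAbove y = v (k + 1) from h, leftInverse_invFun hv])
    · simp only [if_neg hx, if_neg hy, hX.maxAbove_eq hx hxy.le]
      exact .inl rfl
  · rintro ⟨c, k⟩ ⟨d, m⟩ (h | ⟨rfl, rfl, rfl | rfl⟩)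
    · rw [h]
    · simpa using (hmem _).2.2.1
    · simpa using (hmem _).2.2.2
  · funext ⟨c, k⟩
    fin_cases c
    · simp [(hmem k).1, leftInverse_invFun hu k]
    · simp [hX.not_isMin_of_isMax (hmem k).2.1, maxAbove_eq_self (hmem k).2.1,
        leftInverse_invFun hv k]

end Crown

theorem retractsOnto [Nonempty X]
    (hconn : ∀ D : Set X, D.Nonempty → IsUpperSet D → IsLowerSet D → D = univ) :
    RetractsOnto X sLE ∨ ∃ n, 2 ≤ n ∧ RetractsOnto X (crownLE n) := by
  by_cases hmin : ∀ p : X, IsMin p → {q | IsMax q ∧ p ≤ q}.ncard = 2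
  swap
  · push Not at hmin
    obtain ⟨p, hp, h⟩ := hmin
    exact .inl (hX.retractsOnto_sLE_of_isMin hp h)
  by_cases hmax : ∀ q : X, IsMax q → {p | IsMin p ∧ p ≤ q}.ncard = 2
  swap
  · push Not at hmax
    obtain ⟨q, hq, h⟩ := hmax
    exact .inl (hX.retractsOnto_sLE_of_isMax hq h)
  obtain ⟨p, -, hp⟩ := exists_isMax_ge (OrderDual.toDual (Classical.arbitrary X))
  obtain ⟨n, hn, u, v, hu, hv, huv⟩ :=
    exists_crown_of_ncard_eq_two (R := fun p q : X => IsMin p ∧ IsMax q ∧ p ≤ q)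
      (fun p _ h => by simpa [h.1] using hmin p h.1)
      (fun _ q h => by simpa [h.2.1] using hmax q h.2.1)
      (a₀ := OrderDual.ofDual p) ⟨hp, isMax_maxAbove _, le_maxAbove _⟩
  exact .inr ⟨n, hn, hX.retractsOnto_crownLE hconn (fun k => (huv k).1) (fun k => (huv k).2) hu hv⟩

end HasseDegreeTwo

end FinitePoset

section Topology
open TopologicalSpace Specialization Topology

theorem continuous_of_forall_specializes {X Y : Type*} [TopologicalSpace X] [AlexandrovDiscrete X]
    [TopologicalSpace Y] {f : X → Y} (hf : ∀ x y, x ⤳ y → f x ⤳ f y) : Continuous f :=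
  continuous_def.mpr fun _ hU =>
    isOpen_iff_forall_specializes.mpr fun x y hxy hy => (hf x y hxy).mem_open hU hy

theorem specializes_generateFrom_iff {Y : Type*} {B : Set (Set Y)} {a b : Y} :
    @Specializes Y (generateFrom B) a b ↔ ∀ s ∈ B, b ∈ s → a ∈ s := by
  let := generateFrom B
  refine ⟨fun h s hs => h.mem_open (isOpen_generateFrom_of_mem hs), fun h => ?_⟩
  show 𝓝 a ≤ 𝓝 b
  conv_rhs => rw [nhds_generateFrom]
  exact le_iInf₂ fun s ⟨hbs, hs⟩ =>
    Filter.le_principal_iff.mpr ((isOpen_generateFrom_of_mem hs).mem_nhds (h s hs hbs))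

theorem specializes_topS_iff {i j : Fin 4} : @Specializes _ topS i j ↔ sLE j i := by
  rw [topS, specializes_generateFrom_iff]
  simp only [mem_insert_iff, mem_singleton_iff, forall_eq_or_imp, forall_eq]
  revert i j; unfold sLE; decide

theorem specializes_topC_iff {n : ℕ} {a b : Fin 2 × ZMod n} :
    @Specializes _ (topC n) a b ↔ crownLE n b a := by
  rw [topC, specializes_generateFrom_iff]
  constructor
  · intro h
    obtain ⟨c, k⟩ := b
    fin_cases c
    · rcases h _ (.inr ⟨k, rfl⟩) (mem_insert _ _) with rfl | rfl | rfl
      exacts [.inl rfl, .inr ⟨rfl, rfl, .inl rfl⟩, .inr ⟨rfl, rfl, .inr rfl⟩]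
    · exact .inl (h _ (.inl ⟨k, rfl⟩) rfl).symm
  · rintro (rfl | ⟨hb, ha, hk⟩) s hs hbs
    · exact hbs
    obtain ⟨b1, b2⟩ := b
    obtain ⟨a1, a2⟩ := a
    simp only at hb ha hk
    subst hb ha
    rcases hs with ⟨m, rfl⟩ | ⟨m, rfl⟩
    · simp at hbs
    · simp_all

theorem covBy_iff_specCov {X : Type*} [TopologicalSpace X] [T0Space X]
    {x y : Specialization X} : x ⋖ y ↔ specCov (ofEquiv x) (ofEquiv y) := by
  have hlt (a b : Specialization X) : a < b ↔ specLT (ofEquiv a) (ofEquiv b) := by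
    rw [lt_iff_le_and_ne, ← ofEquiv_specializes_ofEquiv, specializes_iff_mem_closure]
    rfl
  simp only [CovBy, specCov, hlt, not_exists, not_and]
  rfl

theorem hasseDegreeTwo_specialization {X : Type*} [TopologicalSpace X] [T0Space X]
    (hdeg : ∀ x : X, hasseDeg x = 2) : HasseDegreeTwo (Specialization X) := fun x => by
  rw [← hdeg (ofEquiv x), hasseDeg, ← Nat.card_coe_set_eq, ← Nat.card_coe_set_eq]
  congr 1 <;> exact Nat.card_congr (Equiv.subtypeEquiv ofEquiv fun _ => covBy_iff_specCov)

theorem eq_univ_of_isUpperSet_of_isLowerSet {X : Type*} [TopologicalSpace X] [AlexandrovDiscrete X]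
    [ConnectedSpace X] {D : Set (Specialization X)} (hD : D.Nonempty) (hup : IsUpperSet D)
    (hlow : IsLowerSet D) : D = univ := by
  have hopen : IsOpen (toEquiv ⁻¹' D) := isOpen_toEquiv_preimage.mpr hup
  have hclosed : IsClosed (toEquiv ⁻¹' D) := by
    rw [← isOpen_compl_iff, ← preimage_compl]
    exact isOpen_toEquiv_preimage.mpr hlow.compl
  have h := IsClopen.eq_univ ⟨hclosed, hopen⟩ (hD.preimage toEquiv.surjective)
  exact eq_univ_of_forall fun x => (h ▸ mem_univ (ofEquiv x) : ofEquiv x ∈ toEquiv ⁻¹' D)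

theorem exists_continuous_retract {X Y : Type*} [TopologicalSpace X] [AlexandrovDiscrete X]
    (tY : TopologicalSpace Y) [Finite Y] {r : Y → Y → Prop}
    (hr : ∀ a b, @Specializes Y tY a b ↔ r b a) (h : RetractsOnto (Specialization X) r) :
    ∃ f : X → Y, ∃ g : Y → X, @Continuous X Y _ tY f ∧ @Continuous Y X tY _ g ∧ f ∘ g = id := by
  let := tY
  obtain ⟨f, g, hf, hg, hfg⟩ := h
  exact ⟨f ∘ toEquiv, ofEquiv ∘ g,
    continuous_of_forall_specializes fun x y hxy => (hr _ _).2 (hf _ _ hxy),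
    continuous_of_forall_specializes fun a b hab => hg _ _ ((hr a b).1 hab), hfg⟩

end Topology

/-- If `X` is a finite connected T0-space in which every vertex of the Hasse diagram has
unoriented degree `2`, then there are a space `Y`, either `S` or `C_n` for some `n ≥ 2`,
and continuous maps `f : X → Y`, `g : Y → X` with `f ∘ g = id`. -/
theorem stmt10 {X : Type*} [tX : TopologicalSpace X] [Finite X] [T0Space X] [ConnectedSpace X]
    (hdeg : ∀ x : X, hasseDeg x = 2) :
    (∃ f : X → Fin 4, ∃ g : Fin 4 → X,
      @Continuous X (Fin 4) tX topS f ∧ @Continuous (Fin 4) X topS tX g ∧ f ∘ g = id) ∨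
    ∃ n : ℕ, 2 ≤ n ∧ ∃ f : X → Fin 2 × ZMod n, ∃ g : Fin 2 × ZMod n → X,
      @Continuous X (Fin 2 × ZMod n) tX (topC n) f ∧
      @Continuous (Fin 2 × ZMod n) X (topC n) tX g ∧ f ∘ g = id := by
  have : Finite (Specialization X) := ‹Finite X›
  have : Nonempty (Specialization X) := inferInstanceAs (Nonempty X)
  rcases (hasseDegreeTwo_specialization hdeg).retractsOnto
    (fun _ hD hup hlow => eq_univ_of_isUpperSet_of_isLowerSet hD hup hlow) with h | ⟨n, hn, h⟩
  · exact .inl (exists_continuous_retract topS (fun _ _ => specializes_topS_iff) h)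
  · have : NeZero n := ⟨by omega⟩
    exact .inr ⟨n, hn, exists_continuous_retract (topC n) (fun _ _ => specializes_topC_iff) h⟩
end

section
/- Let X be a finite T0 topological space with n points that has path-shaped Hasse diagram. Then the number of nonempty connected locally closed subsets of X equals n(n+1)/2. -/
/-!
Index the points along the path by `e` and regard `X` as a poset under specialization. A cover
changes the index by one, so along a chain of covers from `x` to `y` the index takes every value
between its ends; since the Hasse diagram is a path, this also forces the indices of the order
interval `[x, y]` to fill exactly the integers between the indices of `x` and `y`. In a finite
space the locally closed sets are the order-convex ones, so the index intervals `e '' [i, j]` are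
locally closed, and they are connected because consecutive points are comparable. Conversely, if a
connected locally closed set missed an index `k` inside its range, no point of index `< k` could
be comparable to one of index `> k` within the set (convexity would put a point of index `k` in
between), so the two halves would disconnect it. Hence the connected locally closed sets are
exactly the `e '' [i, j]` with `i ≤ j`.
-/

open Set Relation Specialization

section SpecializationOrder

variable {X : Type*} [TopologicalSpace X] {x y : X}

lemma specLE_iff_toEquiv_le : specLE x y ↔ toEquiv x ≤ toEquiv y :=
  specializes_iff_mem_closure.symm

lemma specLT_iff_toEquiv_lt [T0Space X] : specLT x y ↔ toEquiv x < toEquiv y := by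
  rw [specLT, specLE_iff_toEquiv_le, lt_iff_le_and_ne]
  rfl

lemma specCov_iff_toEquiv_covBy [T0Space X] : specCov x y ↔ toEquiv x ⋖ toEquiv y := by
  simp only [specCov, specLT_iff_toEquiv_lt, CovBy, not_exists, not_and]
  rfl

instance [Finite X] : Finite (Specialization X) := ‹Finite X›

noncomputable instance [Finite X] : LocallyFiniteOrder (Specialization X) :=
  LocallyFiniteOrder.ofFiniteIcc fun _ _ ↦ Set.toFinite _

end SpecializationOrder

section IndexedOrder

theorem Relation.ReflTransGen.exists_eq_of_mem_uIcc {α : Type*} {r : α → α → Prop}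
    {f : α → ℕ} (hf : ∀ a b, r a b → f a + 1 = f b ∨ f b + 1 = f a) {x y : α}
    (h : ReflTransGen r x y) {k : ℕ} (hk : k ∈ uIcc (f x) (f y)) :
    ∃ z, ReflTransGen r x z ∧ ReflTransGen r z y ∧ f z = k := by
  induction h with
  | refl =>
    exact ⟨x, .refl, .refl, by simpa only [uIcc_self, mem_singleton_iff, eq_comm] using hk⟩
  | @tail b c hxb hbc ih =>
    by_cases hkb : k ∈ uIcc (f x) (f b)
    · obtain ⟨z, hxz, hzb, rfl⟩ := ih hkb
      exact ⟨z, hxz, hzb.tail hbc, rfl⟩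
    · refine ⟨c, hxb.tail hbc, .refl, ?_⟩
      have := hf b c hbc
      simp only [mem_uIcc] at hk hkb
      omega

variable {P : Type*} [PartialOrder P] [LocallyFiniteOrder P] {f : P → ℕ}
  (hf : ∀ a b : P, a ⋖ b → f a + 1 = f b ∨ f b + 1 = f a)
include hf

lemma exists_mem_Icc_eq_of_mem_uIcc {x y : P} (hxy : x ≤ y) {k : ℕ}
    (hk : k ∈ uIcc (f x) (f y)) : ∃ z ∈ Icc x y, f z = k := by
  obtain ⟨z, hxz, hzy, rfl⟩ := (le_iff_reflTransGen_covBy.mp hxy).exists_eq_of_mem_uIcc hf hk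
  exact ⟨z, ⟨le_iff_reflTransGen_covBy.mpr hxz, le_iff_reflTransGen_covBy.mpr hzy⟩, rfl⟩

lemma image_Icc_eq_uIcc_of_adjacent (hinj : Function.Injective f) {x y : P} (hxy : x ≤ y) :
    f '' Icc x y = uIcc (f x) (f y) := by
  refine Subset.antisymm ?_ fun k hk ↦ exists_mem_Icc_eq_of_mem_uIcc hf hxy hk
  rintro _ ⟨z, hz, rfl⟩
  by_contra hzxy
  -- Otherwise one end lies between `f z` and the other end; reaching it from `z` forces `z` to
  -- be that end.
  have : f x ∈ uIcc (f z) (f y) ∨ f y ∈ uIcc (f x) (f z) := by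
    simp only [mem_uIcc] at hzxy ⊢
    omega
  rcases this with hx | hy
  · obtain ⟨w, hw, hwx⟩ := exists_mem_Icc_eq_of_mem_uIcc hf hz.2 hx
    obtain rfl := hinj hwx
    exact hzxy (le_antisymm hw.1 hz.1 ▸ left_mem_uIcc)
  · obtain ⟨w, hw, hwy⟩ := exists_mem_Icc_eq_of_mem_uIcc hf hz.1 hy
    obtain rfl := hinj hwy
    exact hzxy (le_antisymm hz.2 hw.2 ▸ right_mem_uIcc)

lemma Set.OrdConnected.preimage_of_adjacent (hinj : Function.Injective f) {s : Set ℕ}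
    (hs : s.OrdConnected) : (f ⁻¹' s).OrdConnected :=
  ⟨fun _ hx _ hy _ hz ↦ hs.uIcc_subset hx hy <|
    image_Icc_eq_uIcc_of_adjacent hf hinj (hz.1.trans hz.2) ▸ mem_image_of_mem f hz⟩

lemma lt_iff_lt_of_notMem_image {S : Set P} (hS : S.OrdConnected) {k : ℕ} (hk : k ∉ f '' S)
    {x y : P} (hx : x ∈ S) (hy : y ∈ S) (hxy : x ≤ y) : f x < k ↔ f y < k := by
  by_contra h
  obtain ⟨z, hz, rfl⟩ := exists_mem_Icc_eq_of_mem_uIcc hf hxy (k := k) (by rw [mem_uIcc]; omega)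
  exact hk ⟨z, hS.out hx hy hz, rfl⟩

end IndexedOrder

lemma Set.OrdConnected.exists_eq_Icc {α : Type*} [LinearOrder α] {s : Set α}
    (hs : s.OrdConnected) (hfin : s.Finite) (hne : s.Nonempty) : ∃ a b, s = Icc a b := by
  obtain ⟨a, ha, hmin⟩ := s.exists_min_image id hfin hne
  obtain ⟨b, hb, hmax⟩ := s.exists_max_image id hfin hne
  exact ⟨a, b, Subset.antisymm (fun x hx ↦ ⟨hmin x hx, hmax x hx⟩) (hs.out ha hb)⟩

section Topology

variable {X : Type*} [TopologicalSpace X] {S : Set X}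

lemma IsLocallyClosed.ordConnected (hS : IsLocallyClosed S) : (ofEquiv ⁻¹' S).OrdConnected := by
  obtain ⟨U, Z, hU, hZ, rfl⟩ := hS
  exact ⟨fun x hx y hy z hz ↦ ⟨hz.1.mem_open hU hx.1, hz.2.mem_closed hZ hy.2⟩⟩

lemma isLocallyClosed_iff_ordConnected [AlexandrovDiscrete X] :
    IsLocallyClosed S ↔ (ofEquiv ⁻¹' S).OrdConnected := by
  refine ⟨IsLocallyClosed.ordConnected, fun hS ↦ ?_⟩
  have hZ : IsClosed {z | ∃ x ∈ S, x ⤳ z} := by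
    rw [← isOpen_compl_iff, isOpen_iff_forall_specializes]
    exact fun a b hab hb ⟨x, hx, hxa⟩ ↦ hb ⟨x, hx, hxa.trans hab⟩
  refine ⟨nhdsKer S, _, isOpen_nhdsKer, hZ, (subset_inter subset_nhdsKer ?_).antisymm ?_⟩
  · exact fun x hx ↦ ⟨x, hx, specializes_rfl⟩
  · rintro z ⟨hzU, x, hx, hxz⟩
    obtain ⟨y, hy, hzy⟩ := mem_nhdsKer_iff_specializes.mp hzU
    exact hS.out (x := toEquiv y) hy (y := toEquiv x) hx
      (show toEquiv z ∈ Icc _ _ from ⟨hzy, hxz⟩)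

lemma IsPreconnected.subset_of_specializes_iff [AlexandrovDiscrete X] {T : Set X}
    (hS : IsPreconnected S) (hT : ∀ x ∈ S, ∀ y ∈ S, x ⤳ y → (x ∈ T ↔ y ∈ T))
    (hne : (S ∩ T).Nonempty) : S ⊆ T := by
  have hST (a b : S) (h : a ⤳ b) : (a : X) ∈ T ↔ (b : X) ∈ T :=
    hT a a.2 b b.2 ((subtype_specializes_iff a b).mp h)
  have hclopen : IsClopen ((↑) ⁻¹' T : Set S) := by
    refine ⟨?_, ?_⟩
    · rw [← isOpen_compl_iff, isOpen_iff_forall_specializes]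
      exact fun a b hab hb ha ↦ hb ((hST a b hab).mp ha)
    · rw [isOpen_iff_forall_specializes]
      exact fun a b hab hb ↦ (hST a b hab).mpr hb
  have := isPreconnected_iff_preconnectedSpace.mp hS
  obtain ⟨x, hxS, hxT⟩ := hne
  exact fun y hy ↦ eq_univ_iff_forall.mp (hclopen.eq_univ ⟨⟨x, hxS⟩, hxT⟩) ⟨y, hy⟩

lemma isPreconnected_pair_of_specializes {x y : X} (h : x ⤳ y) :
    IsPreconnected ({x, y} : Set X) :=
  isPreconnected_singleton.subset_closure (singleton_subset_iff.mpr (mem_insert x _))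
    (insert_subset (subset_closure rfl)
      (singleton_subset_iff.mpr (specializes_iff_mem_closure.mp h)))

lemma isPreconnected_image_Icc_of_specializes {β : Type*} [LinearOrder β] [SuccOrder β]
    [IsSuccArchimedean β] {p : β → X}
    (hp : ∀ k, p k ⤳ p (Order.succ k) ∨ p (Order.succ k) ⤳ p k) (i j : β) :
    IsPreconnected (p '' Icc i j) := by
  rcases lt_or_ge j i with hji | hij
  · simp [Icc_eq_empty_of_lt hji, isPreconnected_empty]
  induction hij using Succ.rec with
  | rfl => simpa using isPreconnected_singleton
  | succ j hij ih =>
    have hpair : IsPreconnected {p j, p (Order.succ j)} := by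
      rcases hp j with h | h
      · exact isPreconnected_pair_of_specializes h
      · exact pair_comm _ _ ▸ isPreconnected_pair_of_specializes h
    have hj : p j ∈ p '' Icc i j := mem_image_of_mem p ⟨hij, le_rfl⟩
    rw [Order.Icc_succ_right (hij.trans (Order.le_succ j)), image_insert_eq]
    convert hpair.union (p j) (mem_insert _ _) hj ih using 1
    rw [insert_union, singleton_union, insert_comm, insert_eq_of_mem hj]

end Topology

lemma Nat.card_subtype_fst_le_snd_fin (n : ℕ) :
    Nat.card {p : Fin n × Fin n // p.1 ≤ p.2} = n * (n + 1) / 2 := by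
  rw [← Nat.card_congr Sym2.sortEquiv, Nat.card_eq_fintype_card, Sym2.card, Fintype.card_fin,
    Nat.choose_two_right, Nat.add_sub_cancel, Nat.mul_comm]

def pathIndex {X : Type*} {n : ℕ} (e : Fin n ≃ X) (p : Specialization X) : ℕ :=
  e.symm (ofEquiv p)

lemma pathIndex_injective {X : Type*} {n : ℕ} (e : Fin n ≃ X) :
    Function.Injective (pathIndex e) :=
  Fin.val_injective.comp (e.symm.injective.comp ofEquiv.injective)

section PathShaped

variable {X : Type*} [TopologicalSpace X] {n : ℕ} {e : Fin n ≃ X}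
  (he : ∀ i j : Fin n,
    (specCov (e i) (e j) ∨ specCov (e j) (e i)) ↔ (i.val + 1 = j.val ∨ j.val + 1 = i.val))
include he

lemma pathIndex_adjacent_of_covBy [T0Space X] {a b : Specialization X} (hab : a ⋖ b) :
    pathIndex e a + 1 = pathIndex e b ∨ pathIndex e b + 1 = pathIndex e a :=
  (he _ _).mp (Or.inl (by simpa [specCov_iff_toEquiv_covBy] using hab))

lemma isLocallyClosed_image_Icc [Finite X] [T0Space X] (i j : Fin n) :
    IsLocallyClosed (e '' Icc i j) := by
  have hIcc : (ofEquiv ⁻¹' (e '' Icc i j) : Set (Specialization X)) =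
      pathIndex e ⁻¹' Icc (i : ℕ) j := by
    ext p
    simp only [e.image_eq_preimage_symm, mem_preimage, mem_Icc, Fin.le_def, pathIndex]
  rw [isLocallyClosed_iff_ordConnected, hIcc]
  exact ordConnected_Icc.preimage_of_adjacent (fun _ _ ↦ pathIndex_adjacent_of_covBy he)
    (pathIndex_injective e)

lemma isConnected_image_Icc {i j : Fin n} (hij : i ≤ j) : IsConnected (e '' Icc i j) := by
  refine ⟨(nonempty_Icc.mpr hij).image e,
    isPreconnected_image_Icc_of_specializes (fun k ↦ ?_) i j⟩
  by_cases hk : IsMax k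
  · rw [Order.succ_eq_iff_isMax.mpr hk]
    exact Or.inl specializes_rfl
  have hsucc : (k : ℕ) + 1 = Order.succ k :=
    Nat.covBy_iff_add_one_eq.mp (Fin.covBy_iff.mp (Order.covBy_succ_of_not_isMax hk))
  rcases (he k (Order.succ k)).mpr (Or.inl hsucc) with h | h
  · exact Or.inr (specializes_iff_mem_closure.mpr h.1.1)
  · exact Or.inl (specializes_iff_mem_closure.mpr h.1.1)

lemma ordConnected_image_symm [Finite X] [T0Space X] {S : Set X} (hS : IsConnected S)
    (hlc : IsLocallyClosed S) : (e.symm '' S).OrdConnected := by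
  refine ⟨?_⟩
  rintro _ ⟨x, hx, rfl⟩ _ ⟨y, hy, rfl⟩ k ⟨hk₁, hk₂⟩
  by_contra hkS
  have hgap : (k : ℕ) ∉ pathIndex e '' (ofEquiv ⁻¹' S) := by
    rintro ⟨z, hz, hzk⟩
    exact hkS ⟨ofEquiv z, hz, Fin.ext hzk⟩
  have hsplit : ∀ a ∈ S, ∀ b ∈ S, a ⤳ b →
      ((e.symm a : ℕ) < k ↔ (e.symm b : ℕ) < k) :=
    fun a ha b hb hab ↦ (lt_iff_lt_of_notMem_image (fun _ _ ↦ pathIndex_adjacent_of_covBy he)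
      hlc.ordConnected hgap (x := toEquiv b) (y := toEquiv a) hb ha hab).symm
  have hxk : (e.symm x : ℕ) < k := by
    have : e.symm x ≠ k := fun h ↦ hkS ⟨x, hx, h⟩
    omega
  have hyk : (e.symm y : ℕ) < k :=
    hS.isPreconnected.subset_of_specializes_iff (T := {z | (e.symm z : ℕ) < k}) hsplit
      ⟨x, hx, hxk⟩ hy
  omega

lemma exists_eq_image_Icc [Finite X] [T0Space X] {S : Set X} (hS : IsConnected S)
    (hlc : IsLocallyClosed S) : ∃ i j, i ≤ j ∧ S = e '' Icc i j := by
  obtain ⟨i, j, hij⟩ := (ordConnected_image_symm he hS hlc).exists_eq_Icc (toFinite _)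
    (hS.nonempty.image _)
  refine ⟨i, j, nonempty_Icc.mp (hij ▸ hS.nonempty.image _), ?_⟩
  rw [← hij, e.image_symm_image]

end PathShaped

/-- In a finite T0-space with `n` points and path-shaped Hasse diagram, the number of
nonempty connected locally closed subsets is `n (n + 1) / 2`. -/
theorem stmt13 {X : Type*} [TopologicalSpace X] [Finite X] [T0Space X] (n : ℕ)
    (hpath : ∃ e : Fin n ≃ X, ∀ i j : Fin n,
      (specCov (e i) (e j) ∨ specCov (e j) (e i)) ↔ (i.val + 1 = j.val ∨ j.val + 1 = i.val)) :
    Nat.card {Y : Set X // IsConnected Y ∧ IsLocallyClosed Y} = n * (n + 1) / 2 := by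
  obtain ⟨e, he⟩ := hpath
  let F : {p : Fin n × Fin n // p.1 ≤ p.2} →
      {Y : Set X // IsConnected Y ∧ IsLocallyClosed Y} := fun p ↦
    ⟨e '' Icc p.1.1 p.1.2, isConnected_image_Icc he p.2, isLocallyClosed_image_Icc he _ _⟩
  have hF : F.Bijective := by
    refine ⟨fun p q hpq ↦ ?_, fun S ↦ ?_⟩
    · have hIcc := e.injective.image_injective (congrArg Subtype.val hpq)
      exact Subtype.ext (Prod.ext_iff.mpr ((Icc_eq_Icc_iff p.2).mp hIcc))
    · obtain ⟨i, j, hij, hS⟩ := exists_eq_image_Icc he S.2.1 S.2.2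
      exact ⟨⟨(i, j), hij⟩, Subtype.ext hS.symm⟩
  rw [← Nat.card_eq_of_bijective F hF, Nat.card_subtype_fst_le_snd_fin]
end
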